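/- arXiv:2602.13897 — 2 statements merged into one kernel-verified Lean document; each statement's English description precedes it below -/
import Mathlib

section
/- Let v : [0,1]^m → ℝ≥0 be a linear valuation function, i.e., v(x) = Σ_{j=1}^m v_j x_j with v_j ≥ 0. Let p : [0,1]^m → ℝ≥0 be an MLC pricing function, let p̂ = conv(p), and let x̂ ∈ [0,1]^m. Then there exists x* ∈ [0,1]^m such that p(x*) = p̂(x*) and v(x*) − p̂(x*) ≥ v(x̂) − p̂(x̂). -/
/-!
Since `p` is lower semicontinuous, `v - p` attains its maximum `M` on the compact cube at some
`x*`. The epigraph of `p` lies in the convex epigraph of `x ↦ v x - M`, hence so does its convex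
hull, i.e. `v - p̂ ≤ M` on the cube. Together with `p̂ ≤ p` this forces `p̂ x* = p x*`, and `x*`
then maximizes `v - p̂` as well.
-/

noncomputable section

/-- The unit cube `[0,1]^m` in `Fin m → ℝ`. -/
def cube (m : ℕ) : Set (Fin m → ℝ) := Set.Icc 0 1

/-- The lower limit of `f` at `x₀` relative to the domain `D` (in the extended reals). -/
def lowerLim {E : Type*} [SeminormedAddCommGroup E] (D : Set E) (f : E → ℝ) (x₀ : E) : EReal :=
  ⨆ δ : {δ : ℝ // 0 < δ}, ⨅ x : {x : E // x ∈ D ∧ ‖x - x₀‖ ≤ δ.1}, (f x.1 : EReal)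

/-- `f` is lower-continuous on `D`. -/
def LowerContOn {E : Type*} [SeminormedAddCommGroup E] (D : Set E) (f : E → ℝ) : Prop :=
  ∀ x₀ ∈ D, lowerLim D f x₀ = (f x₀ : EReal)

/-- The epigraph of `f` relative to the domain `D`. -/
def epigraph {E : Type*} (D : Set E) (f : E → ℝ) : Set (E × ℝ) :=
  {q | q.1 ∈ D ∧ f q.1 ≤ q.2}

/-- The convex hull of a function: `conv(f)(x) = inf {y : (x,y) ∈ conv(epi f)}`. -/
def funConvHull {E : Type*} [AddCommGroup E] [Module ℝ E] (D : Set E) (f : E → ℝ) : E → ℝ :=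
  fun x => sInf {y : ℝ | (x, y) ∈ convexHull ℝ (epigraph D f)}

open Set

theorem LowerContOn.lowerSemicontinuousOn {E : Type*} [SeminormedAddCommGroup E] {D : Set E}
    {f : E → ℝ} (h : LowerContOn D f) : LowerSemicontinuousOn f D := by
  intro x hx c hc
  have hc_lt : (c : EReal) < lowerLim D f x := by
    rw [h x hx]
    exact_mod_cast hc
  obtain ⟨⟨δ, hδ⟩, hδc⟩ := lt_iSup_iff.1 hc_lt
  filter_upwards [self_mem_nhdsWithin,
    mem_nhdsWithin_of_mem_nhds (Metric.ball_mem_nhds x hδ)] with y hyD hy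
  have hy_near : ‖y - x‖ ≤ δ := (dist_eq_norm y x ▸ Metric.mem_ball.1 hy).le
  exact_mod_cast hδc.trans_le (iInf_le _ ⟨y, hyD, hy_near⟩)

section FunConvHull

variable {E : Type*} [AddCommGroup E] [Module ℝ E] {D : Set E} {f g : E → ℝ}

theorem convexHull_epigraph_subset_of_convexOn (hg : ConvexOn ℝ univ g)
    (hgf : ∀ x ∈ D, g x ≤ f x) : convexHull ℝ (epigraph D f) ⊆ epigraph univ g :=
  convexHull_min (fun q hq => ⟨mem_univ _, (hgf q.1 hq.1).trans hq.2⟩) hg.convex_epigraph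

theorem le_funConvHull_of_convexOn (hg : ConvexOn ℝ univ g) (hgf : ∀ x ∈ D, g x ≤ f x)
    {x : E} (hx : x ∈ D) : g x ≤ funConvHull D f x :=
  le_csInf ⟨f x, subset_convexHull ℝ _ ⟨hx, le_rfl⟩⟩ fun _ hy =>
    (convexHull_epigraph_subset_of_convexOn hg hgf hy).2

theorem funConvHull_le_of_convexOn (hg : ConvexOn ℝ univ g) (hgf : ∀ x ∈ D, g x ≤ f x)
    {x : E} (hx : x ∈ D) : funConvHull D f x ≤ f x :=
  csInf_le ⟨g x, fun _ hy => (convexHull_epigraph_subset_of_convexOn hg hgf hy).2⟩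
    (subset_convexHull ℝ _ ⟨hx, le_rfl⟩)

theorem IsMaxOn.funConvHull_eq_and_isMaxOn {ℓ : E → ℝ} (hℓ : ConvexOn ℝ univ ℓ) {xs : E}
    (hxs : xs ∈ D) (hmax : IsMaxOn (fun x => ℓ x - f x) D xs) :
    f xs = funConvHull D f xs ∧ IsMaxOn (fun x => ℓ x - funConvHull D f x) D xs := by
  set M := ℓ xs - f xs
  have hg : ConvexOn ℝ univ (fun x => ℓ x + -M) := hℓ.add_const (-M)
  have hgf : ∀ x ∈ D, ℓ x + -M ≤ f x := fun x hx => by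
    have : ℓ x - f x ≤ M := hmax hx
    linarith
  have heq : f xs = funConvHull D f xs :=
    le_antisymm (by linarith [le_funConvHull_of_convexOn hg hgf hxs])
      (funConvHull_le_of_convexOn hg hgf hxs)
  refine ⟨heq, fun x hx => ?_⟩
  have := le_funConvHull_of_convexOn hg hgf hx
  show ℓ x - funConvHull D f x ≤ ℓ xs - funConvHull D f xs
  linarith

end FunConvHull

theorem stmt4_general (m : ℕ) (vcoef : Fin m → ℝ)
    (p : (Fin m → ℝ) → ℝ) (hp_lc : LowerContOn (cube m) p)
    (xhat : Fin m → ℝ) (hxhat : xhat ∈ cube m) :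
    ∃ xstar ∈ cube m,
      p xstar = funConvHull (cube m) p xstar ∧
      (∑ j, vcoef j * xstar j) - funConvHull (cube m) p xstar ≥
        (∑ j, vcoef j * xhat j) - funConvHull (cube m) p xhat := by
  set v : (Fin m → ℝ) → ℝ := fun x => ∑ j, vcoef j * x j
  have hv_convex : ConvexOn ℝ univ v :=
    (LinearMap.convexOn (∑ j, vcoef j • LinearMap.proj j) convex_univ).congr fun x _ => by simp [v]
  have hv_cont : Continuous v := by fun_prop
  have husc : UpperSemicontinuousOn (fun x => v x - p x) (cube m) := by
    simpa only [Pi.neg_apply, ← sub_eq_add_neg] using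
      hv_cont.continuousOn.upperSemicontinuousOn.add hp_lc.lowerSemicontinuousOn.neg
  obtain ⟨xs, hxs, hmax⟩ := husc.exists_isMaxOn ⟨xhat, hxhat⟩ isCompact_Icc
  obtain ⟨heq, hmax_conv⟩ := hmax.funConvHull_eq_and_isMaxOn hv_convex hxs
  exact ⟨xs, hxs, heq, hmax_conv hxhat⟩

/-- Let `v x = ∑ j, vcoef j * x j` be a linear valuation with
nonnegative coefficients, let `p` be an MLC pricing function on `[0,1]^m`, let
`p̂ = conv p`, and let `x̂ ∈ [0,1]^m`. Then there is `x* ∈ [0,1]^m` with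
`p x* = p̂ x*` and `v x* - p̂ x* ≥ v x̂ - p̂ x̂`. -/
theorem stmt4 (m : ℕ) (vcoef : Fin m → ℝ) (hv : ∀ j, 0 ≤ vcoef j)
    (p : (Fin m → ℝ) → ℝ) (hp_nonneg : ∀ x ∈ cube m, 0 ≤ p x) (hp0 : p 0 = 0)
    (hp_mono : MonotoneOn p (cube m)) (hp_lc : LowerContOn (cube m) p)
    (xhat : Fin m → ℝ) (hxhat : xhat ∈ cube m) :
    ∃ xstar ∈ cube m,
      p xstar = funConvHull (cube m) p xstar ∧
      (∑ j, vcoef j * xstar j) - funConvHull (cube m) p xstar ≥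
        (∑ j, vcoef j * xhat j) - funConvHull (cube m) p xhat :=
  stmt4_general m vcoef p hp_lc xhat hxhat

end
end

section
/- Consider n buyers and m datasets; each buyer i ∈ [n] has a budget b_i ∈ ℝ≥0 and values v_{i,j} ∈ ℝ≥0, with linear valuation v_i(x) = Σ_{j=1}^m v_{i,j} x_j on [0,1]^m. For each j ∈ [m] let S_j = {v_{i,j} : i ∈ [n]}. For each j ∈ [m] let p_j : [0,1] → ℝ≥0 be an MLC pricing function and set p̂_j = disc(conv(p_j), S_j). Define p(x) = Σ_{j=1}^m p_j(x_j) and p̂(x) = Σ_{j=1}^m p̂_j(x_j). Then r(p̂|v_i,b_i) ≥ r(p|v_i,b_i) for every i ∈ [n], and each p̂_j is monotone, continuous, convex, and piecewise-linear. -/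
/-
Fix a buyer with values `w_j` and budget `b`, and let `f_j = conv(p_j)`, `ζ_j = ℓ(f_j|w_j)`.
Lower continuity of `p_j` makes `f_j` lower semicontinuous, so `ζ_j` itself has left derivative
at most `w_j` and the line of slope `w_j` through `(ζ_j, f_j ζ_j)` supports `f_j`. In a bundle
demanded under `p` no coordinate `x_j` can profitably be lowered; comparing `p_j` with affine
minorants then gives `p_j(x_j) ≤ f_j(ζ_j) ≤ p̂_j(ζ_j)`, so every such bundle costs at most
`min(b, ∑_j p̂_j(ζ_j))`. The slopes of `p̂_j` are at most `w_j` left of `ζ_j` and at least `w_j`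
right of it, so `ζ` maximises utility under `p̂` on the cube. Moving from a budget-constrained
optimum towards `ζ` keeps the utility maximal by concavity, and by the intermediate value
property of the cost along the way it reaches a demanded bundle costing exactly
`min(b, ∑_j p̂_j(ζ_j))`.
-/

noncomputable section

/-- The unit interval `[0,1] ⊆ ℝ`. -/
def unitI : Set ℝ := Set.Icc 0 1

/-- The left derivative of `f` at `x`, as an extended real, with `f'(0) = -∞`. -/
def leftD (f : ℝ → ℝ) (x : ℝ) : EReal :=
  ⨆ δ : {δ : ℝ // 0 < δ ∧ δ ≤ x}, (((f x - f (x - δ.1)) / δ.1 : ℝ) : EReal)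

/-- `ℓ(f|β)`: the rightmost point of `[0,1]` at which the left derivative of `f`
is at most `β`. -/
def ell (f : ℝ → ℝ) (β : ℝ) : ℝ :=
  sSup {x ∈ unitI | leftD f x ≤ (β : EReal)}

/-- The `i`-th smallest element of a finite set `S ⊆ ℝ` (`0`-indexed). -/
def sortedNth (S : Finset ℝ) (i : ℕ) : ℝ := (S.sort (· ≤ ·)).getD i 0

/-- The breakpoints `z_0 = 0, z_i = ℓ(f|α_i) (1 ≤ i ≤ k-1), z_k = 1` of `disc(f,S)`. -/
def discKnot (f : ℝ → ℝ) (S : Finset ℝ) (i : ℕ) : ℝ :=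
  if i = 0 then 0 else if i < S.card then ell f (sortedNth S (i - 1)) else 1

/-- The discretization `disc(f,S) = f 0 + plin(z,α)` of `f` along `S = {α_1 < ⋯ < α_k}`,
where `z_i = ℓ(f|α_i)`; on `[0,1]`, `plin(z,α)(x) = ∑_i α_i (min(x,z_i) - min(x,z_{i-1}))`
with `z_0 = 0` and `z_k = 1`. -/
def disc (f : ℝ → ℝ) (S : Finset ℝ) : ℝ → ℝ := fun x =>
  f 0 + ∑ i ∈ Finset.range S.card,
    sortedNth S i * (min x (discKnot f S (i + 1)) - min x (discKnot f S i))

/-- The affordable set `F(p|b)` (budget in the extended reals, `⊤` = infinite). -/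
def afford {E : Type*} (D : Set E) (p : E → ℝ) (b : EReal) : Set E :=
  {x ∈ D | (p x : EReal) ≤ b}

/-- The maximum net utility `u*(p|v,b)`. -/
def uStar {E : Type*} (D : Set E) (p v : E → ℝ) (b : EReal) : ℝ :=
  ⨆ x : afford D p b, (v x.1 - p x.1)

/-- The demand set `Dem(p|v,b)`. -/
def demand {E : Type*} (D : Set E) (p v : E → ℝ) (b : EReal) : Set E :=
  {x ∈ afford D p b | v x - p x = uStar D p v b}

/-- The revenue `r(p|v,b)`. -/
def revenue {E : Type*} (D : Set E) (p v : E → ℝ) (b : EReal) : ℝ :=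
  ⨆ x : demand D p v b, p x.1

/-- `f` is piecewise-linear on `[0,1]`: `[0,1]` splits into finitely many intervals,
on each of which `f` is affine. -/
def PiecewiseLinearOn (f : ℝ → ℝ) : Prop :=
  ∃ (k : ℕ) (t : Fin (k + 1) → ℝ), Monotone t ∧ t 0 = 0 ∧ t (Fin.last k) = 1 ∧
    ∀ i : Fin k, ∃ a c : ℝ, ∀ x ∈ Set.Icc (t i.castSucc) (t i.succ), f x = a * x + c

open Filter Topology

lemma convex_unitI : Convex ℝ unitI := convex_Icc 0 1

lemma zero_mem_unitI : (0 : ℝ) ∈ unitI := ⟨le_rfl, zero_le_one⟩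

lemma convexOn_mul_add {s : Set ℝ} (hs : Convex ℝ s) (a c : ℝ) :
    ConvexOn ℝ s (fun u => a * u + c) :=
  ⟨hs, fun _ _ _ _ _ _ _ _ hst =>
    le_of_eq (by simp only [smul_eq_mul]; linear_combination -c * hst)⟩

lemma concaveOn_mul_add {s : Set ℝ} (hs : Convex ℝ s) (a c : ℝ) :
    ConcaveOn ℝ s (fun u => a * u + c) :=
  ⟨hs, fun _ _ _ _ _ _ _ _ hst =>
    le_of_eq (by simp only [smul_eq_mul]; linear_combination c * hst)⟩

lemma convexOn_fun_sum {E ι : Type*} [AddCommGroup E] [Module ℝ E] {s : Set E}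
    (hs : Convex ℝ s) {t : Finset ι} {g : ι → E → ℝ} (hg : ∀ i ∈ t, ConvexOn ℝ s (g i)) :
    ConvexOn ℝ s (fun x => ∑ i ∈ t, g i x) := by
  simpa only [Finset.sum_fn] using
    Finset.sum_induction g (ConvexOn ℝ s) (fun _ _ => ConvexOn.add) (convexOn_const 0 hs) hg

lemma concaveOn_fun_sum {E ι : Type*} [AddCommGroup E] [Module ℝ E] {s : Set E}
    (hs : Convex ℝ s) {t : Finset ι} {g : ι → E → ℝ} (hg : ∀ i ∈ t, ConcaveOn ℝ s (g i)) :
    ConcaveOn ℝ s (fun x => ∑ i ∈ t, g i x) := by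
  simpa only [Finset.sum_fn] using
    Finset.sum_induction g (ConcaveOn ℝ s) (fun _ _ => ConcaveOn.add) (concaveOn_const 0 hs) hg

lemma convexOn_mul_max_sub {c : ℝ} (hc : 0 ≤ c) (z : ℝ) :
    ConvexOn ℝ Set.univ (fun x : ℝ => c * max (x - z) 0) := by
  have := (((convexOn_id convex_univ).add_const (-z)).sup (convexOn_const 0 convex_univ)).smul hc
  exact this.congr fun x _ => by simp [sub_eq_add_neg]

lemma sortedNth_eq_orderEmbOfFin {S : Finset ℝ} {i : ℕ} (hi : i < S.card) :
    sortedNth S i = S.orderEmbOfFin rfl ⟨i, hi⟩ := by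
  simp [sortedNth, Finset.orderEmbOfFin_apply, hi]

lemma sortedNth_mem {S : Finset ℝ} {i : ℕ} (hi : i < S.card) : sortedNth S i ∈ S := by
  rw [sortedNth_eq_orderEmbOfFin hi]
  exact S.orderEmbOfFin_mem rfl _

lemma sortedNth_le_sortedNth_iff {S : Finset ℝ} {i j : ℕ} (hi : i < S.card) (hj : j < S.card) :
    sortedNth S i ≤ sortedNth S j ↔ i ≤ j := by
  rw [sortedNth_eq_orderEmbOfFin hi, sortedNth_eq_orderEmbOfFin hj, OrderEmbedding.le_iff_le,
    Fin.mk_le_mk]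

lemma exists_sortedNth_eq {S : Finset ℝ} {a : ℝ} (ha : a ∈ S) :
    ∃ i < S.card, sortedNth S i = a := by
  rw [← Finset.mem_coe, ← S.range_orderEmbOfFin rfl] at ha
  obtain ⟨⟨i, hi⟩, rfl⟩ := ha
  exact ⟨i, hi, sortedNth_eq_orderEmbOfFin hi⟩

lemma leftD_le_iff {f : ℝ → ℝ} {x β : ℝ} :
    leftD f x ≤ β ↔ ∀ δ, 0 < δ → δ ≤ x → (f x - f (x - δ)) / δ ≤ β := by
  simp only [leftD, iSup_le_iff, EReal.coe_le_coe_iff, Subtype.forall, and_imp]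

lemma sub_le_of_leftD_le {f : ℝ → ℝ} {d e β : ℝ} (h : leftD f e ≤ β) (hd : 0 ≤ d)
    (hde : d ≤ e) : f e - f d ≤ β * (e - d) := by
  rcases hde.eq_or_lt with rfl | hde
  · simp
  have := leftD_le_iff.1 h (e - d) (by linarith) (by linarith)
  rw [sub_sub_cancel, div_le_iff₀ (by linarith)] at this
  linarith

lemma leftD_zero_le (f : ℝ → ℝ) (β : ℝ) : leftD f 0 ≤ β :=
  leftD_le_iff.2 fun _ h1 h2 => absurd (h1.trans_le h2) (lt_irrefl 0)

lemma bddAbove_ellSet (f : ℝ → ℝ) (β : ℝ) : BddAbove {x ∈ unitI | leftD f x ≤ β} :=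
  ⟨1, fun _ hx => hx.1.2⟩

lemma zero_mem_ellSet (f : ℝ → ℝ) (β : ℝ) : (0 : ℝ) ∈ {x ∈ unitI | leftD f x ≤ β} :=
  ⟨zero_mem_unitI, leftD_zero_le f β⟩

lemma le_ell {f : ℝ → ℝ} {β x : ℝ} (hx : x ∈ unitI) (h : leftD f x ≤ β) : x ≤ ell f β :=
  le_csSup (bddAbove_ellSet f β) ⟨hx, h⟩

lemma ell_mem_unitI (f : ℝ → ℝ) (β : ℝ) : ell f β ∈ unitI :=
  ⟨le_ell (zero_mem_ellSet f β).1 (leftD_zero_le f β),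
    csSup_le ⟨0, zero_mem_ellSet f β⟩ fun _ hx => hx.1.2⟩

lemma ell_mono (f : ℝ → ℝ) : Monotone (ell f) := fun _ _ h =>
  csSup_le_csSup (bddAbove_ellSet f _) ⟨0, zero_mem_ellSet f _⟩
    fun _ hx => ⟨hx.1, hx.2.trans (EReal.coe_le_coe_iff.2 h)⟩

lemma lt_leftD_of_ell_lt {f : ℝ → ℝ} {β y : ℝ} (hy : y ∈ unitI) (h : ell f β < y) :
    β < leftD f y :=
  lt_of_not_ge fun hle => (le_ell hy hle).not_gt h

lemma discKnot_zero (f : ℝ → ℝ) (S : Finset ℝ) : discKnot f S 0 = 0 := rfl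

lemma discKnot_of_card_le (f : ℝ → ℝ) (S : Finset ℝ) {i : ℕ} (h0 : i ≠ 0) (hi : S.card ≤ i) :
    discKnot f S i = 1 := by
  simp [discKnot, h0, hi]

lemma discKnot_succ (f : ℝ → ℝ) (S : Finset ℝ) {i : ℕ} (hi : i + 1 < S.card) :
    discKnot f S (i + 1) = ell f (sortedNth S i) := by
  simp [discKnot, hi]

lemma discKnot_mem_unitI (f : ℝ → ℝ) (S : Finset ℝ) (i : ℕ) : discKnot f S i ∈ unitI := by
  unfold discKnot
  split_ifs
  exacts [zero_mem_unitI, ell_mem_unitI f _, ⟨zero_le_one, le_rfl⟩]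

lemma discKnot_mono (f : ℝ → ℝ) (S : Finset ℝ) : Monotone (discKnot f S) := by
  refine monotone_nat_of_le_succ fun i => ?_
  rcases i with _ | i
  · exact (discKnot_mem_unitI f S 1).1
  by_cases hi : i + 2 < S.card
  · rw [discKnot_succ f S hi, discKnot_succ f S (by omega)]
    exact ell_mono f ((sortedNth_le_sortedNth_iff (by omega) (by omega)).2 (by omega))
  · rw [discKnot_of_card_le f S (i := i + 2) (by omega) (by omega)]
    exact (discKnot_mem_unitI f S _).2

section Disc

/-- For `a ≤ b`, the length of `[a, b] ∩ (-∞, x]`. -/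
def clipLen (a b x : ℝ) : ℝ := min x b - min x a

lemma clipLen_eq_min_max_sub {a b : ℝ} (hab : a ≤ b) (x : ℝ) :
    clipLen a b x = min (max x a) b - a := by
  simp only [clipLen]
  rcases le_total x a with h | h
  · rw [min_eq_left (h.trans hab), min_eq_left h, max_eq_right h, min_eq_left hab, sub_self,
      sub_self]
  · rw [min_eq_right h, max_eq_left h]

lemma clipLen_mono {a b : ℝ} (hab : a ≤ b) : Monotone (clipLen a b) := fun x y hxy => by
  simp only [clipLen_eq_min_max_sub hab]
  gcongr

lemma clipLen_eq_of_le_or_le {a b x y : ℝ} (hab : a ≤ b) (hxy : x ≤ y) (h : y ≤ a ∨ b ≤ x) :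
    clipLen a b y = clipLen a b x := by
  simp only [clipLen_eq_min_max_sub hab]
  rcases h with h | h
  · rw [max_eq_right h, max_eq_right (hxy.trans h)]
  · rw [min_eq_right (h.trans (le_max_left x a)),
      min_eq_right ((h.trans hxy).trans (le_max_left y a))]

lemma clipLen_eq_max_sub_max (a b x : ℝ) : clipLen a b x = max (x - a) 0 - max (x - b) 0 := by
  simp only [clipLen]
  rcases le_total x a with h1 | h1 <;> rcases le_total x b with h2 | h2 <;>
    simp only [min_eq_left, min_eq_right, max_eq_left, max_eq_right, h1, h2, sub_nonneg,
      sub_nonpos] <;> ring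

variable {f : ℝ → ℝ} {S : Finset ℝ}

lemma disc_apply (x : ℝ) : disc f S x = f 0 + ∑ i ∈ Finset.range S.card,
    sortedNth S i * clipLen (discKnot f S i) (discKnot f S (i + 1)) x := rfl

lemma sum_clipLen_sub_clipLen (hS : S.Nonempty) {x y : ℝ} (hx : x ∈ unitI) (hy : y ∈ unitI) :
    ∑ i ∈ Finset.range S.card, (clipLen (discKnot f S i) (discKnot f S (i + 1)) y -
      clipLen (discKnot f S i) (discKnot f S (i + 1)) x) = y - x := by
  rw [Finset.sum_sub_distrib]
  simp only [clipLen]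
  rw [Finset.sum_range_sub (fun i => min y (discKnot f S i)),
    Finset.sum_range_sub (fun i => min x (discKnot f S i)),
    discKnot_of_card_le f S hS.card_pos.ne' le_rfl, discKnot_zero, min_eq_left hx.2,
    min_eq_right hx.1, min_eq_left hy.2, min_eq_right hy.1]
  ring

lemma disc_sub_disc (x y : ℝ) : disc f S y - disc f S x = ∑ i ∈ Finset.range S.card,
    sortedNth S i * (clipLen (discKnot f S i) (discKnot f S (i + 1)) y -
      clipLen (discKnot f S i) (discKnot f S (i + 1)) x) := by
  simp only [disc_apply, mul_sub, Finset.sum_sub_distrib]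
  ring

lemma disc_sub_disc_le (hS : S.Nonempty) {x y β : ℝ} (hx : x ∈ unitI) (hy : y ∈ unitI)
    (hxy : x ≤ y) (h : ∀ i < S.card, discKnot f S i < y → sortedNth S i ≤ β) :
    disc f S y - disc f S x ≤ β * (y - x) := by
  rw [disc_sub_disc, ← sum_clipLen_sub_clipLen hS hx hy, Finset.mul_sum]
  refine Finset.sum_le_sum fun i hi => ?_
  have hz := discKnot_mono f S (Nat.le_add_right i 1)
  by_cases hzy : discKnot f S i < y
  · exact mul_le_mul_of_nonneg_right (h i (Finset.mem_range.1 hi) hzy)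
      (sub_nonneg.2 (clipLen_mono hz hxy))
  · simp [clipLen_eq_of_le_or_le hz hxy (Or.inl (not_lt.1 hzy))]

lemma le_disc_sub_disc (hS : S.Nonempty) {x y β : ℝ} (hx : x ∈ unitI) (hy : y ∈ unitI)
    (hxy : x ≤ y) (h : ∀ i < S.card, x < discKnot f S (i + 1) → β ≤ sortedNth S i) :
    β * (y - x) ≤ disc f S y - disc f S x := by
  rw [disc_sub_disc, ← sum_clipLen_sub_clipLen hS hx hy, Finset.mul_sum]
  refine Finset.sum_le_sum fun i hi => ?_
  have hz := discKnot_mono f S (Nat.le_add_right i 1)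
  by_cases hzx : x < discKnot f S (i + 1)
  · exact mul_le_mul_of_nonneg_right (h i (Finset.mem_range.1 hi) hzx)
      (sub_nonneg.2 (clipLen_mono hz hxy))
  · simp [clipLen_eq_of_le_or_le hz hxy (Or.inr (not_lt.1 hzx))]

lemma sortedNth_le_of_discKnot_lt_ell {β : ℝ} (hβ : β ∈ S) {i : ℕ} (hi : i < S.card)
    (h : discKnot f S i < ell f β) : sortedNth S i ≤ β := by
  obtain ⟨j, hj, rfl⟩ := exists_sortedNth_eq hβ
  by_contra! hlt
  have hji : j + 1 ≤ i := by
    have := (sortedNth_le_sortedNth_iff hi hj).not.1 hlt.not_ge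
    omega
  obtain ⟨i, rfl⟩ := Nat.exists_eq_add_of_le' (by omega : 1 ≤ i)
  rw [discKnot_succ f S hi] at h
  exact h.not_ge (ell_mono f ((sortedNth_le_sortedNth_iff hj (by omega)).2 (by omega)))

lemma le_sortedNth_of_ell_lt_discKnot {β : ℝ} (hβ : β ∈ S) {i : ℕ} (hi : i < S.card)
    (h : ell f β < discKnot f S (i + 1)) : β ≤ sortedNth S i := by
  obtain ⟨j, hj, rfl⟩ := exists_sortedNth_eq hβ
  by_contra! hlt
  have hij : i < j := by
    have := (sortedNth_le_sortedNth_iff hj hi).not.1 hlt.not_ge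
    omega
  rw [discKnot_succ f S (by omega)] at h
  exact h.not_ge (ell_mono f ((sortedNth_le_sortedNth_iff hi hj).2 hij.le))

lemma mul_sub_disc_le_ell {β : ℝ} (hβ : β ∈ S) {x : ℝ} (hx : x ∈ unitI) :
    β * x - disc f S x ≤ β * ell f β - disc f S (ell f β) := by
  have hS : S.Nonempty := ⟨β, hβ⟩
  rcases le_total x (ell f β) with hxζ | hζx
  · have := disc_sub_disc_le hS hx (ell_mem_unitI f β) hxζ
      fun i hi h => sortedNth_le_of_discKnot_lt_ell hβ hi h
    linarith
  · have := le_disc_sub_disc hS (ell_mem_unitI f β) hx hζx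
      fun i hi h => le_sortedNth_of_ell_lt_discKnot hβ hi h
    linarith

lemma apply_ell_le_disc {β : ℝ} (hβ : β ∈ S)
    (hf : ∀ γ ∈ S, ∀ d c, 0 ≤ d → d ≤ c → c ≤ ell f γ → f c - f d ≤ γ * (c - d)) :
    f (ell f β) ≤ disc f S (ell f β) := by
  have hS : S.Nonempty := ⟨β, hβ⟩
  set ζ := ell f β
  have hζ := ell_mem_unitI f β
  have htel : f ζ - f 0 = ∑ i ∈ Finset.range S.card,
      (f (min ζ (discKnot f S (i + 1))) - f (min ζ (discKnot f S i))) := by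
    rw [Finset.sum_range_sub (fun i => f (min ζ (discKnot f S i))),
      discKnot_of_card_le f S hS.card_pos.ne' le_rfl, discKnot_zero, min_eq_left hζ.2,
      min_eq_right hζ.1]
  have hterm : ∀ i ∈ Finset.range S.card,
      f (min ζ (discKnot f S (i + 1))) - f (min ζ (discKnot f S i)) ≤
        sortedNth S i * clipLen (discKnot f S i) (discKnot f S (i + 1)) ζ := by
    intro i hi
    have hi := Finset.mem_range.1 hi
    refine hf _ (sortedNth_mem hi) _ _ (le_min hζ.1 (discKnot_mem_unitI f S i).1)
      (min_le_min_left _ (discKnot_mono f S (Nat.le_add_right i 1))) ?_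
    rcases lt_or_ge (i + 1) S.card with h | h
    · exact (min_le_right _ _).trans (discKnot_succ f S h).le
    · obtain ⟨j, hj, hjβ⟩ := exists_sortedNth_eq hβ
      refine (min_le_left _ _).trans (ell_mono f ?_)
      rw [← hjβ, sortedNth_le_sortedNth_iff hj hi]
      omega
  rw [disc_apply]
  linarith [Finset.sum_le_sum hterm]

lemma sum_mul_sub_succ (α H : ℕ → ℝ) (k : ℕ) :
    ∑ i ∈ Finset.range k, α i * (H i - H (i + 1)) =
      ∑ i ∈ Finset.range k, (α i - if i = 0 then 0 else α (i - 1)) * H i -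
        (if k = 0 then 0 else α (k - 1)) * H k := by
  induction k with
  | zero => simp
  | succ k ih =>
    rw [Finset.sum_range_succ, ih, Finset.sum_range_succ]
    simp only [Nat.add_one_ne_zero, if_false, Nat.add_sub_cancel]
    ring

/-- The jump `α_i - α_{i-1}` of the slope of `disc f S` at its `i`-th knot (`α_{-1} = 0`). -/
def discJump (S : Finset ℝ) (i : ℕ) : ℝ :=
  sortedNth S i - if i = 0 then 0 else sortedNth S (i - 1)

lemma discJump_nonneg (hS : ∀ a ∈ S, 0 ≤ a) {i : ℕ} (hi : i < S.card) : 0 ≤ discJump S i := by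
  rcases i with _ | i
  · simpa [discJump] using hS _ (sortedNth_mem hi)
  · simpa [discJump] using (sortedNth_le_sortedNth_iff (by omega) hi).2 (Nat.le_add_right i 1)

lemma disc_eq_sum_hinge {x : ℝ} (hx : x ∈ unitI) :
    disc f S x = f 0 + ∑ i ∈ Finset.range S.card, discJump S i * max (x - discKnot f S i) 0 := by
  simp only [disc_apply, clipLen_eq_max_sub_max, sum_mul_sub_succ, discJump]
  have hlast : (if S.card = 0 then 0 else sortedNth S (S.card - 1)) *
      max (x - discKnot f S S.card) 0 = 0 := by
    split_ifs with h
    · exact zero_mul _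
    · rw [discKnot_of_card_le f S h le_rfl, max_eq_right (by linarith [hx.2]), mul_zero]
  rw [hlast, sub_zero]

lemma convexOn_disc (hS : ∀ a ∈ S, 0 ≤ a) : ConvexOn ℝ unitI (disc f S) := by
  have hconv : ConvexOn ℝ Set.univ
      (fun x => f 0 + ∑ i ∈ Finset.range S.card, discJump S i * max (x - discKnot f S i) 0) :=
    (convexOn_const _ convex_univ).add (convexOn_fun_sum convex_univ fun i hi =>
      convexOn_mul_max_sub (discJump_nonneg hS (Finset.mem_range.1 hi)) _)
  exact (hconv.subset (Set.subset_univ _) convex_unitI).congr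
    fun x hx => (disc_eq_sum_hinge hx).symm

lemma disc_mono (hS : ∀ a ∈ S, 0 ≤ a) : Monotone (disc f S) := fun _ _ hxy =>
  add_le_add_right (Finset.sum_le_sum fun i hi => mul_le_mul_of_nonneg_left
    (clipLen_mono (discKnot_mono f S (Nat.le_add_right i 1)) hxy)
    (hS _ (sortedNth_mem (Finset.mem_range.1 hi)))) _

lemma continuous_disc (f : ℝ → ℝ) (S : Finset ℝ) : Continuous (disc f S) := by
  unfold disc
  fun_prop

lemma disc_zero (f : ℝ → ℝ) (S : Finset ℝ) : disc f S 0 = f 0 := by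
  simp [disc_eq_sum_hinge (f := f) (S := S) zero_mem_unitI,
    (discKnot_mem_unitI f S _).1]

lemma disc_piecewiseLinearOn (f : ℝ → ℝ) (S : Finset ℝ) : PiecewiseLinearOn (disc f S) := by
  refine ⟨S.card + 1, fun i => discKnot f S i, fun i j hij => discKnot_mono f S hij,
    discKnot_zero f S, discKnot_of_card_le f S (Nat.add_one_ne_zero _) (Nat.le_add_right _ 1),
    fun i => ?_⟩
  set T := (Finset.range S.card).filter (· ≤ (i : ℕ))
  refine ⟨∑ j ∈ T, discJump S j, f 0 - ∑ j ∈ T, discJump S j * discKnot f S j,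
    fun x ⟨hix, hxi⟩ => ?_⟩
  simp only [Fin.val_castSucc, Fin.val_succ] at hix hxi
  have hx : x ∈ unitI :=
    ⟨(discKnot_mem_unitI f S i).1.trans hix, hxi.trans (discKnot_mem_unitI f S _).2⟩
  have hterm : ∀ j ∈ Finset.range S.card, discJump S j * max (x - discKnot f S j) 0 =
      if j ≤ i then discJump S j * (x - discKnot f S j) else 0 := by
    intro j _
    split_ifs with hj
    · rw [max_eq_left (sub_nonneg.2 ((discKnot_mono f S hj).trans hix))]
    · rw [max_eq_right (sub_nonpos.2 (hxi.trans (discKnot_mono f S (by omega)))), mul_zero]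
  rw [disc_eq_sum_hinge hx, Finset.sum_congr rfl hterm, ← Finset.sum_filter, Finset.sum_mul]
  simp only [mul_sub, Finset.sum_sub_distrib]
  ring

end Disc

/-- Approximate `ℓ(f|β)` from below by points of the set defining it; lower semicontinuity
carries their slope bound to the limit. -/
lemma LowerSemicontinuousOn.leftD_ell_le {f : ℝ → ℝ} (hlsc : LowerSemicontinuousOn f unitI)
    {β : ℝ} (hβ : 0 ≤ β) : leftD f (ell f β) ≤ β := by
  set ζ := ell f β
  refine leftD_le_iff.2 fun δ hδ hδζ => ?_
  rw [div_le_iff₀ hδ]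
  refine le_of_forall_pos_le_add fun η hη => ?_
  obtain ⟨γ, hγ, hball⟩ := Metric.mem_nhdsWithin_iff.1
    (hlsc ζ (ell_mem_unitI f β) (f ζ - η) (by linarith))
  obtain ⟨e, ⟨he, heβ⟩, hlt⟩ := exists_lt_of_lt_csSup ⟨0, zero_mem_ellSet f β⟩
    (show max (ζ - δ) (ζ - γ) < ζ by simp [hδ, hγ])
  have heζ : e ≤ ζ := le_ell he heβ
  have hfe : f ζ - η < f e := hball ⟨by
    rw [Metric.mem_ball, Real.dist_eq, abs_of_nonpos (by linarith)]
    linarith [le_max_right (ζ - δ) (ζ - γ)], he⟩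
  have := sub_le_of_leftD_le heβ (by linarith) (le_max_left (ζ - δ) (ζ - γ) |>.trans hlt.le)
  nlinarith [le_max_left (ζ - δ) (ζ - γ)]

namespace ConvexOn

variable {f : ℝ → ℝ} {β : ℝ}

lemma sub_le_of_le_ell (hf : ConvexOn ℝ unitI f) (hlsc : LowerSemicontinuousOn f unitI)
    (hβ : 0 ≤ β) {c d : ℝ} (hd : 0 ≤ d) (hdc : d ≤ c) (hc : c ≤ ell f β) :
    f c - f d ≤ β * (c - d) := by
  set ζ := ell f β
  have hζ := ell_mem_unitI f β
  have hsupp := sub_le_of_leftD_le (hlsc.leftD_ell_le hβ) hd (hdc.trans hc)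
  rcases hdc.eq_or_lt with rfl | hdc
  · simp
  have hsec := hf.secant_mono (a := d) ⟨hd, by linarith [hζ.2]⟩ ⟨by linarith, by linarith [hζ.2]⟩
    hζ hdc.ne' (by linarith) hc
  rw [div_le_div_iff₀ (by linarith) (by linarith)] at hsec
  nlinarith

lemma add_mul_sub_ell_le_of_ell_le (hf : ConvexOn ℝ unitI f) (hmono : MonotoneOn f unitI)
    {a : ℝ} (ha : a ∈ unitI) (hζa : ell f β ≤ a) : f (ell f β) + β * (a - ell f β) ≤ f a := by
  set ζ := ell f β
  have hζ := ell_mem_unitI f β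
  rcases hζa.eq_or_lt with rfl | hζa
  · simp
  have hstep : ∀ y ∈ Set.Ioo ζ a, f ζ + β * (a - y) ≤ f a := by
    rintro y ⟨hζy, hya⟩
    have hy : y ∈ unitI := ⟨hζ.1.trans hζy.le, hya.le.trans ha.2⟩
    obtain ⟨⟨δ, hδ, hδy⟩, hslope⟩ := lt_iSup_iff.1 (lt_leftD_of_ell_lt hy hζy)
    have hslope : β < (f y - f (y - δ)) / δ := EReal.coe_lt_coe_iff.1 hslope
    have hadj := hf.slope_mono_adjacent (x := y - δ) ⟨by linarith, by linarith [hy.2]⟩ ha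
      (by linarith) hya
    rw [sub_sub_cancel] at hadj
    have := (lt_div_iff₀ (by linarith : 0 < a - y)).1 (hslope.trans_le hadj)
    linarith [hmono hζ hy hζy.le]
  refine le_of_tendsto (x := 𝓝[>] ζ) ?_ (Filter.mem_of_superset (Ioo_mem_nhdsGT hζa) hstep)
  exact ((show Continuous fun y => f ζ + β * (a - y) by fun_prop).tendsto ζ).mono_left
    nhdsWithin_le_nhds

lemma add_mul_sub_ell_le (hf : ConvexOn ℝ unitI f) (hmono : MonotoneOn f unitI)
    (hlsc : LowerSemicontinuousOn f unitI) (hβ : 0 ≤ β) {u : ℝ} (hu : u ∈ unitI) :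
    f (ell f β) + β * (u - ell f β) ≤ f u := by
  rcases le_total u (ell f β) with huζ | hζu
  · linarith [hf.sub_le_of_le_ell hlsc hβ hu.1 huζ le_rfl]
  · exact hf.add_mul_sub_ell_le_of_ell_le hmono hu hζu

end ConvexOn

section funConvHull

variable {E : Type*} [AddCommGroup E] [Module ℝ E] {D : Set E} {f g : E → ℝ} {x : E}

lemma convexHull_epigraph_subset (hg : ConvexOn ℝ D g) (hgf : ∀ x ∈ D, g x ≤ f x) :
    convexHull ℝ (epigraph D f) ⊆ epigraph D g :=
  convexHull_min (fun _ hq => ⟨hq.1, (hgf _ hq.1).trans hq.2⟩) hg.convex_epigraph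

lemma mem_convexHull_epigraph (hx : x ∈ D) : (x, f x) ∈ convexHull ℝ (epigraph D f) :=
  subset_convexHull ℝ _ ⟨hx, le_rfl⟩

lemma le_funConvHull (hg : ConvexOn ℝ D g) (hgf : ∀ x ∈ D, g x ≤ f x) (hx : x ∈ D) :
    g x ≤ funConvHull D f x :=
  le_csInf ⟨f x, mem_convexHull_epigraph hx⟩ fun _ hy => (convexHull_epigraph_subset hg hgf hy).2

lemma bddBelow_convexHull_epigraph_fiber (hD : Convex ℝ D) (hf : ∀ x ∈ D, 0 ≤ f x)
    (x : E) : BddBelow {y | (x, y) ∈ convexHull ℝ (epigraph D f)} :=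
  ⟨0, fun _ hy => (convexHull_epigraph_subset (convexOn_const 0 hD) hf hy).2⟩

lemma funConvHull_le (hD : Convex ℝ D) (hf : ∀ x ∈ D, 0 ≤ f x) (hx : x ∈ D) :
    funConvHull D f x ≤ f x :=
  csInf_le (bddBelow_convexHull_epigraph_fiber hD hf x) (mem_convexHull_epigraph hx)

lemma funConvHull_nonneg (hD : Convex ℝ D) (hf : ∀ x ∈ D, 0 ≤ f x) (hx : x ∈ D) :
    0 ≤ funConvHull D f x :=
  le_funConvHull (g := fun _ => 0) (convexOn_const 0 hD) hf hx

lemma convexOn_funConvHull (hD : Convex ℝ D) (hf : ∀ x ∈ D, 0 ≤ f x) :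
    ConvexOn ℝ D (funConvHull D f) := by
  refine ⟨hD, fun x hx y hy a b ha hb hab => le_of_forall_pos_le_add fun ε hε => ?_⟩
  obtain ⟨u, hu, hux⟩ := exists_lt_of_csInf_lt ⟨f x, mem_convexHull_epigraph hx⟩
    (lt_add_of_pos_right (funConvHull D f x) hε)
  obtain ⟨w, hw, hwy⟩ := exists_lt_of_csInf_lt ⟨f y, mem_convexHull_epigraph hy⟩
    (lt_add_of_pos_right (funConvHull D f y) hε)
  have hmem : (a • x + b • y, a * u + b * w) ∈ convexHull ℝ (epigraph D f) := by
    simpa using convex_convexHull ℝ _ hu hw ha hb hab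
  calc funConvHull D f (a • x + b • y) ≤ a * u + b * w :=
        csInf_le (bddBelow_convexHull_epigraph_fiber hD hf _) hmem
    _ ≤ a * (funConvHull D f x + ε) + b * (funConvHull D f y + ε) := by gcongr
    _ = a • funConvHull D f x + b • funConvHull D f y + ε := by
        rw [smul_eq_mul, smul_eq_mul]
        linear_combination ε * hab

end funConvHull

lemma LowerContOn.exists_lt {E : Type*} [SeminormedAddCommGroup E] {D : Set E} {f : E → ℝ}
    (hf : LowerContOn D f) {x₀ : E} (hx₀ : x₀ ∈ D) {y : ℝ} (hy : y < f x₀) :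
    ∃ δ > 0, ∀ x ∈ D, ‖x - x₀‖ ≤ δ → y < f x := by
  have h : (y : EReal) < lowerLim D f x₀ := by
    rw [hf x₀ hx₀]
    exact_mod_cast hy
  obtain ⟨⟨δ, hδ⟩, hδy⟩ := lt_iSup_iff.1 h
  exact ⟨δ, hδ, fun x hx hxδ => EReal.coe_lt_coe_iff.1 (hδy.trans_le
    (iInf_le (fun x : {x // x ∈ D ∧ ‖x - x₀‖ ≤ δ} => (f x.1 : EReal)) ⟨x, hx, hxδ⟩))⟩

section Pricing

variable {p : ℝ → ℝ}

lemma funConvHull_zero (hnn : ∀ x ∈ unitI, 0 ≤ p x) (hp0 : p 0 = 0) :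
    funConvHull unitI p 0 = 0 := by
  linarith [funConvHull_le convex_unitI hnn zero_mem_unitI,
    funConvHull_nonneg convex_unitI hnn zero_mem_unitI]

lemma monotoneOn_funConvHull (hnn : ∀ x ∈ unitI, 0 ≤ p x) (hp0 : p 0 = 0) :
    MonotoneOn (funConvHull unitI p) unitI := by
  intro x hx y hy hxy
  rcases hx.1.eq_or_lt with rfl | hx0
  · rw [funConvHull_zero hnn hp0]
    exact funConvHull_nonneg convex_unitI hnn hy
  · refine (convexOn_funConvHull convex_unitI hnn).le_right_of_left_le''
      zero_mem_unitI hy hx0 hxy ?_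
    rw [funConvHull_zero hnn hp0]
    exact funConvHull_nonneg convex_unitI hnn hx

lemma mul_sub_div_le_of_monotoneOn (hnn : ∀ x ∈ unitI, 0 ≤ p x) (hmono : MonotoneOn p unitI)
    {x₀ : ℝ} (h0 : 0 ≤ x₀) (h1 : x₀ < 1) {u : ℝ} (hu : u ∈ unitI) :
    p x₀ * (u - x₀) / (1 - x₀) ≤ p u := by
  have hx₀ : x₀ ∈ unitI := ⟨h0, h1.le⟩
  rw [div_le_iff₀ (by linarith)]
  rcases le_total u x₀ with hux | hxu
  · nlinarith [hnn x₀ hx₀, hnn u hu]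
  · nlinarith [hmono hx₀ hu hxu, hnn x₀ hx₀, hu.2]

lemma lowerSemicontinuousOn_funConvHull (hnn : ∀ x ∈ unitI, 0 ≤ p x) (hp0 : p 0 = 0)
    (hmono : MonotoneOn p unitI) (hlc : LowerContOn unitI p) :
    LowerSemicontinuousOn (funConvHull unitI p) unitI := by
  intro c hc y hy
  rcases hc.2.eq_or_lt with rfl | hc1
  · obtain ⟨δ, hδ, hδy⟩ := hlc.exists_lt hc (hy.trans_le (funConvHull_le convex_unitI hnn hc))
    -- `conv p` lies above the line through `(x₀, 0)` and `(1, p x₀)`, and `p x₀ > y`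
    set x₀ := max 0 (1 - δ)
    have hx₀1 : x₀ < 1 := max_lt zero_lt_one (by linarith)
    have hx₀ : x₀ ∈ unitI := ⟨le_max_left _ _, hx₀1.le⟩
    have hpx₀ : y < p x₀ := hδy x₀ hx₀ (by
      rw [Real.norm_eq_abs, abs_of_neg (by linarith)]
      linarith [le_max_right 0 (1 - δ)])
    have hL : ∀ u ∈ unitI, p x₀ * (u - x₀) / (1 - x₀) ≤ funConvHull unitI p u := fun u hu =>
      le_funConvHull ((convexOn_mul_add convex_unitI (p x₀ / (1 - x₀))
        (-(p x₀ * x₀ / (1 - x₀)))).congr fun u _ => by ring)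
        (fun u hu => mul_sub_div_le_of_monotoneOn hnn hmono hx₀.1 hx₀1 hu) hu
    have hcont : Tendsto (fun u => p x₀ * (u - x₀) / (1 - x₀)) (𝓝 1) (𝓝 (p x₀)) := by
      have := (show Continuous fun u : ℝ => p x₀ * (u - x₀) / (1 - x₀) by fun_prop).tendsto 1
      rwa [mul_div_assoc, div_self (by linarith), mul_one] at this
    filter_upwards [nhdsWithin_le_nhds (hcont.eventually (lt_mem_nhds hpx₀)),
      self_mem_nhdsWithin] with u hu hu' using hu.trans_le (hL u hu')
  rcases hc.1.eq_or_lt with rfl | hc0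
  · filter_upwards [self_mem_nhdsWithin] with u hu using
      hy.trans_le (monotoneOn_funConvHull hnn hp0 hc hu hu.1)
  · have hint : c ∈ interior unitI := by
      rw [unitI, interior_Icc]
      exact ⟨hc0, hc1⟩
    exact (((convexOn_funConvHull convex_unitI hnn).continuousOn_interior c
      hint).continuousAt (isOpen_interior.mem_nhds hint)).continuousWithinAt
      |>.lowerSemicontinuousWithinAt y hy

end Pricing

/-- `g = βG/(β+G)` solves `(β - g)(G - g) = g²`, so no `d ≥ 0` violates both alternatives. -/
lemma exists_tilt {β G : ℝ} (hβ : 0 ≤ β) (hG : 0 < G) :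
    ∃ g, 0 ≤ g ∧ g < G ∧ ∀ d, 0 ≤ d → (β - g) * d ≤ g ∨ G - g ≤ g * d := by
  have hβG : 0 < β + G := by linarith
  refine ⟨β * G / (β + G), by positivity, ?_, fun d hd => ?_⟩
  · rw [div_lt_iff₀ hβG]
    nlinarith
  set g := β * G / (β + G)
  have hg : 0 ≤ g := by positivity
  have hid : (β - g) * (G - g) = g * g := by
    simp only [g]
    field_simp
    ring
  by_contra! h
  nlinarith [mul_le_mul_of_nonneg_left h.2.le hg, mul_nonneg hg hd]

/-- If `P > F`, the line of slope `β - g` through `(ζ, P - g)`, with `g` from `exists_tilt`, would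
be an affine minorant of `p` exceeding `F` at `ζ`. -/
lemma le_of_forall_affine_le {p : ℝ → ℝ} {ζ s P F β : ℝ} (hβ : 0 ≤ β) (hζ : ζ ∈ unitI)
    (hζs : ζ ≤ s) (hF : ∀ a c : ℝ, (∀ u ∈ unitI, a * u + c ≤ p u) → a * ζ + c ≤ F)
    (hleft : ∀ u ∈ unitI, u ≤ s → P + β * (u - ζ) ≤ p u)
    (hright : ∀ u ∈ unitI, s ≤ u → P ≤ p u)
    (hsupp : ∀ u ∈ unitI, F + β * (u - ζ) ≤ p u) : P ≤ F := by
  by_contra! hFP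
  obtain ⟨g, hg0, hgG, hg⟩ := exists_tilt hβ (sub_pos.2 hFP)
  suffices (β - g) * ζ + (P - g - (β - g) * ζ) ≤ F by linarith
  refine hF _ _ fun u hu => ?_
  rcases le_total u s with hus | hsu
  · nlinarith [hleft u hu hus, mul_nonneg hg0 (by linarith [hu.1, hζ.2] : 0 ≤ 1 + u - ζ)]
  · rcases hg (u - ζ) (by linarith) with h | h
    · nlinarith [hright u hu hsu]
    · nlinarith [hsupp u hu]

lemma le_funConvHull_ell_of_undominated {p : ℝ → ℝ} (hnn : ∀ x ∈ unitI, 0 ≤ p x)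
    (hp0 : p 0 = 0) (hmono : MonotoneOn p unitI) (hlc : LowerContOn unitI p) {β t : ℝ}
    (hβ : 0 ≤ β) (ht : t ∈ unitI) (hund : ∀ y, 0 ≤ y → y ≤ t → p t - β * (t - y) ≤ p y) :
    p t ≤ funConvHull unitI p (ell (funConvHull unitI p) β) := by
  set f := funConvHull unitI p
  set ζ := ell f β
  have hζ := ell_mem_unitI f β
  have hfp : ∀ u ∈ unitI, f u ≤ p u := fun u hu => funConvHull_le convex_unitI hnn hu
  have hsupp : ∀ u ∈ unitI, f ζ + β * (u - ζ) ≤ f u :=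
    fun u hu => (convexOn_funConvHull convex_unitI hnn).add_mul_sub_ell_le
      (monotoneOn_funConvHull hnn hp0) (lowerSemicontinuousOn_funConvHull hnn hp0 hmono hlc) hβ hu
  have hbound : p t - β * (max t ζ - ζ) ≤ f ζ := by
    refine le_of_forall_affine_le hβ hζ (le_max_right t ζ)
      (fun a c h => le_funConvHull (convexOn_mul_add convex_unitI a c) h hζ)
      (fun u hu hus => ?_) (fun u hu hsu => ?_) fun u hu => (hsupp u hu).trans (hfp u hu)
    · rcases le_total u t with hut | htu
      · nlinarith [hund u hu.1 hut, le_max_left t ζ]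
      · nlinarith [hmono ht hu htu]
    · nlinarith [hmono ht hu ((le_max_left t ζ).trans hsu), le_max_right t ζ]
  rcases le_total t ζ with htζ | hζt
  · simpa [max_eq_right htζ] using hbound
  -- for `t ≥ ζ` the bound caps the left slopes of `f` at `t` by `β`, so `t ≤ ζ`
  rw [max_eq_left hζt] at hbound
  have hleft : leftD f t ≤ β := leftD_le_iff.2 fun δ hδ hδt => by
    rw [div_le_iff₀ hδ]
    nlinarith [hsupp (t - δ) ⟨by linarith, by linarith [ht.2]⟩, hfp t ht]
  have htζ : t = ζ := le_antisymm (le_ell ht hleft) hζt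
  simpa [htζ] using hbound

lemma le_disc_funConvHull_ell_of_undominated {p : ℝ → ℝ} (hnn : ∀ x ∈ unitI, 0 ≤ p x)
    (hp0 : p 0 = 0) (hmono : MonotoneOn p unitI) (hlc : LowerContOn unitI p) {S : Finset ℝ}
    (hS : ∀ a ∈ S, 0 ≤ a) {β t : ℝ} (hβ : β ∈ S) (ht : t ∈ unitI)
    (hund : ∀ y, 0 ≤ y → y ≤ t → p t - β * (t - y) ≤ p y) :
    p t ≤ disc (funConvHull unitI p) S (ell (funConvHull unitI p) β) :=
  (le_funConvHull_ell_of_undominated hnn hp0 hmono hlc (hS β hβ) ht hund).trans <|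
    apply_ell_le_disc hβ fun γ hγ _ _ hd hdc hc =>
      (convexOn_funConvHull convex_unitI hnn).sub_le_of_le_ell
        (lowerSemicontinuousOn_funConvHull hnn hp0 hmono hlc) (hS γ hγ) hd hdc hc

section Market

variable {E : Type*} {D : Set E} {p v : E → ℝ} {b : EReal} {x : E}

lemma le_uStar {M : ℝ} (hM : ∀ y ∈ afford D p b, v y - p y ≤ M) (hx : x ∈ afford D p b) :
    v x - p x ≤ uStar D p v b :=
  le_ciSup (f := fun y : afford D p b => v y.1 - p y.1)
    ⟨M, by rintro _ ⟨y, rfl⟩; exact hM y.1 y.2⟩ ⟨x, hx⟩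

lemma mem_demand_of_forall_le (hx : x ∈ afford D p b)
    (hmax : ∀ y ∈ afford D p b, v y - p y ≤ v x - p x) : x ∈ demand D p v b := by
  have : Nonempty (afford D p b) := ⟨⟨x, hx⟩⟩
  exact ⟨hx, le_antisymm (le_uStar hmax hx) (ciSup_le fun y => hmax y.1 y.2)⟩

lemma le_revenue {b : ℝ} (hx : x ∈ demand D p v b) : p x ≤ revenue D p v b :=
  le_ciSup (f := fun y : demand D p v b => p y.1)
    ⟨b, by rintro _ ⟨y, rfl⟩; exact EReal.coe_le_coe_iff.1 y.2.1.2⟩ ⟨x, hx⟩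

lemma revenue_le {c : ℝ} (hc : 0 ≤ c) (h : ∀ x ∈ demand D p v b, p x ≤ c) :
    revenue D p v b ≤ c :=
  Real.iSup_le (fun x => h x.1 x.2) hc

/-- Move from a budget-constrained optimum towards `z` until the budget binds; concavity keeps
the utility optimal along the way. -/
lemma exists_mem_demand_eq_min [TopologicalSpace E] [AddCommGroup E] [ContinuousAdd E]
    [Module ℝ E] [ContinuousSMul ℝ E] {K : Set E} (hK : IsCompact K) (hKc : Convex ℝ K)
    (hp : Continuous p) (hv : Continuous v) (hu : ConcaveOn ℝ K (fun x => v x - p x))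
    {z : E} (hz : z ∈ K) (hzmax : ∀ x ∈ K, v x - p x ≤ v z - p z) {b : ℝ}
    (hb : ∃ x ∈ K, p x ≤ b) : ∃ x ∈ demand K p v b, p x = min b (p z) := by
  rcases le_or_gt (p z) b with hzb | hbz
  · exact ⟨z, mem_demand_of_forall_le ⟨hz, EReal.coe_le_coe_iff.2 hzb⟩
      fun y hy => hzmax y hy.1, (min_eq_right hzb).symm⟩
  have hafford : afford K p b = K ∩ p ⁻¹' Set.Iic b := by
    ext y
    simp [afford, EReal.coe_le_coe_iff]
  obtain ⟨x₀, hx₀, hx₀max⟩ := (hafford ▸ hK.inter_right (isClosed_Iic.preimage hp)).exists_isMaxOn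
    (by rw [hafford]; exact hb) (hv.sub hp).continuousOn
  have hx₀b : p x₀ ≤ b := EReal.coe_le_coe_iff.1 hx₀.2
  obtain ⟨s, hs, hps⟩ := intermediate_value_Icc zero_le_one
    (show Continuous fun s : ℝ => p (x₀ + s • (z - x₀)) by fun_prop).continuousOn
    (show b ∈ Set.Icc _ _ by simpa using ⟨hx₀b, hbz.le⟩)
  have hps : p (x₀ + s • (z - x₀)) = b := hps
  have hconc := hu.2 hx₀.1 hz (sub_nonneg.2 hs.2) hs.1 (sub_add_cancel 1 s)
  rw [show (1 - s) • x₀ + s • z = x₀ + s • (z - x₀) by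
    rw [sub_smul, one_smul, smul_sub]; abel] at hconc
  simp only [smul_eq_mul] at hconc
  refine ⟨x₀ + s • (z - x₀), mem_demand_of_forall_le
    ⟨hKc.add_smul_sub_mem hx₀.1 hz hs, EReal.coe_le_coe_iff.2 hps.le⟩ fun y hy => ?_,
    by rw [hps, min_eq_left hbz.le]⟩
  have hyx₀ : v y - p y ≤ v x₀ - p x₀ := hx₀max hy
  nlinarith [hzmax x₀ hx₀.1, hs.1]

end Market

lemma mem_cube {m : ℕ} {x : Fin m → ℝ} : x ∈ cube m ↔ ∀ j, x j ∈ unitI := by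
  simp [cube, unitI, Set.mem_Icc, Pi.le_def, forall_and]

lemma concaveOn_cube_sum {m : ℕ} {g : Fin m → ℝ → ℝ} (hg : ∀ j, ConcaveOn ℝ unitI (g j)) :
    ConcaveOn ℝ (cube m) (fun x => ∑ j, g j (x j)) :=
  concaveOn_fun_sum (convex_Icc 0 1) fun j _ =>
    ((hg j).comp_linearMap (LinearMap.proj (R := ℝ) (φ := fun _ : Fin m => ℝ) j)).subset
      (fun _ hx => mem_cube.1 hx j) (convex_Icc 0 1)

lemma sum_update_apply {ι α M : Type*} [Fintype ι] [DecidableEq ι] [AddCommGroup M]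
    (g : ι → α → M) (x : ι → α) (j : ι) (y : α) :
    ∑ r, g r (Function.update x j y r) = ∑ r, g r (x r) + (g j y - g j (x j)) := by
  rw [← Finset.add_sum_erase _ _ (Finset.mem_univ j),
    ← Finset.add_sum_erase _ _ (Finset.mem_univ j), Function.update_self,
    Finset.sum_congr rfl fun r hr => by
      rw [Function.update_of_ne (Finset.ne_of_mem_erase hr)]]
  abel

lemma undominated_of_mem_demand {m : ℕ} {p : Fin m → ℝ → ℝ} {w : Fin m → ℝ} {b : ℝ}
    (hw : ∀ j, 0 ≤ w j) (hnn : ∀ j, ∀ x ∈ unitI, 0 ≤ p j x) (hmono : ∀ j, MonotoneOn (p j) unitI)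
    {x : Fin m → ℝ} (hx : x ∈ demand (cube m) (fun x => ∑ j, p j (x j)) (fun x => ∑ j, w j * x j) b)
    (j : Fin m) {y : ℝ} (hy0 : 0 ≤ y) (hyx : y ≤ x j) : p j (x j) - w j * (x j - y) ≤ p j y := by
  obtain ⟨⟨hxc, hxb⟩, hxu⟩ := hx
  have hxj := mem_cube.1 hxc j
  have hy : y ∈ unitI := ⟨hy0, hyx.trans hxj.2⟩
  have hpy := hmono j hy hxj hyx
  have hx' : Function.update x j y ∈ afford (cube m) (fun x => ∑ j, p j (x j)) b := by
    refine ⟨mem_cube.2 fun r => ?_, ?_⟩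
    · rcases eq_or_ne r j with rfl | hr
      · simpa using hy
      · simpa [hr] using mem_cube.1 hxc r
    · refine le_trans (EReal.coe_le_coe_iff.2 ?_) hxb
      show ∑ r, p r (Function.update x j y r) ≤ ∑ r, p r (x r)
      rw [sum_update_apply p]
      linarith
  have hM : ∀ z ∈ afford (cube m) (fun x => ∑ j, p j (x j)) b,
      ∑ j, w j * z j - ∑ j, p j (z j) ≤ ∑ j, w j := fun z hz => by
    have hz := mem_cube.1 hz.1
    have h1 : ∑ j, w j * z j ≤ ∑ j, w j :=
      Finset.sum_le_sum fun j _ => mul_le_of_le_one_right (hw j) (hz j).2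
    linarith [Finset.sum_nonneg fun j (_ : j ∈ Finset.univ) => hnn j _ (hz j)]
  have := le_uStar hM hx'
  rw [← hxu, sum_update_apply p, sum_update_apply (fun r t => w r * t)] at this
  linarith

theorem revenue_le_revenue_of_undominated_le {m : ℕ} {p q : Fin m → ℝ → ℝ} {w : Fin m → ℝ}
    {b : ℝ} (hb : 0 ≤ b) (hw : ∀ j, 0 ≤ w j) (hnn : ∀ j, ∀ x ∈ unitI, 0 ≤ p j x)
    (hmono : ∀ j, MonotoneOn (p j) unitI) (hq0 : ∀ j, q j 0 = 0)
    (hqnn : ∀ j, ∀ x ∈ unitI, 0 ≤ q j x) (hqcont : ∀ j, Continuous (q j))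
    (hqconv : ∀ j, ConvexOn ℝ unitI (q j)) {ζ : Fin m → ℝ} (hζ : ∀ j, ζ j ∈ unitI)
    (hζmax : ∀ j, ∀ y ∈ unitI, w j * y - q j y ≤ w j * ζ j - q j (ζ j))
    (hund : ∀ j, ∀ t ∈ unitI, (∀ y, 0 ≤ y → y ≤ t → p j t - w j * (t - y) ≤ p j y) →
      p j t ≤ q j (ζ j)) :
    revenue (cube m) (fun x => ∑ j, p j (x j)) (fun x => ∑ j, w j * x j) b ≤
      revenue (cube m) (fun x => ∑ j, q j (x j)) (fun x => ∑ j, w j * x j) b := by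
  have hu : ConcaveOn ℝ (cube m) (fun x => ∑ j, (w j * x j - q j (x j))) :=
    concaveOn_cube_sum (g := fun j y => w j * y - q j y) fun j =>
      ((concaveOn_mul_add convex_unitI (w j) 0).sub (hqconv j)).congr fun y _ => by simp
  obtain ⟨x, hx, hxW⟩ := exists_mem_demand_eq_min (K := cube m) (b := b)
    (p := fun x => ∑ j, q j (x j)) (v := fun x => ∑ j, w j * x j) isCompact_Icc (convex_Icc 0 1)
    (by fun_prop) (by fun_prop) (by simpa only [Finset.sum_sub_distrib] using hu) (mem_cube.2 hζ)
    (fun x hx => by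
      simpa only [← Finset.sum_sub_distrib] using
        Finset.sum_le_sum fun j _ => hζmax j (x j) (mem_cube.1 hx j))
    ⟨0, mem_cube.2 fun _ => zero_mem_unitI, by simp [hq0, hb]⟩
  have hW : 0 ≤ ∑ j, q j (ζ j) := Finset.sum_nonneg fun j _ => hqnn j _ (hζ j)
  have hmin := hxW ▸ le_revenue hx
  refine revenue_le ((le_min hb hW).trans hmin) fun y hy => le_trans (le_min ?_ ?_) hmin
  · exact EReal.coe_le_coe_iff.1 hy.1.2
  · exact Finset.sum_le_sum fun j _ => hund j _ (mem_cube.1 hy.1.1 j)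
      fun t ht0 htx => undominated_of_mem_demand hw hnn hmono hy j ht0 htx

/-- With `n` buyers (budgets `b i ≥ 0`, linear valuations with
coefficients `v i j ≥ 0`) and `m` datasets with MLC pricing functions `p j`, let
`S_j = {v i j : i}` and `p̂_j = disc(conv(p j), S_j)`.  Then the separable pricing
`p̂(x) = ∑ j, p̂_j (x j)` earns at least as much revenue as `p(x) = ∑ j, p j (x j)`
from every buyer, and each `p̂_j` is monotone, continuous, convex and
piecewise-linear. -/
theorem stmt13 (n m : ℕ) (b : Fin n → ℝ) (hb : ∀ i, 0 ≤ b i)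
    (v : Fin n → Fin m → ℝ) (hv : ∀ i j, 0 ≤ v i j)
    (p : Fin m → ℝ → ℝ)
    (hp_nonneg : ∀ j, ∀ x ∈ unitI, 0 ≤ p j x) (hp0 : ∀ j, p j 0 = 0)
    (hp_mono : ∀ j, MonotoneOn (p j) unitI)
    (hp_lc : ∀ j, LowerContOn unitI (p j))
    (phat : Fin m → ℝ → ℝ)
    (hphat : ∀ j, phat j =
      disc (funConvHull unitI (p j)) (Finset.image (fun i => v i j) Finset.univ)) :
    (∀ i : Fin n,
      revenue (cube m) (fun x => ∑ j, phat j (x j)) (fun x => ∑ j, v i j * x j)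
          (b i : EReal) ≥
        revenue (cube m) (fun x => ∑ j, p j (x j)) (fun x => ∑ j, v i j * x j)
          (b i : EReal)) ∧
    (∀ j : Fin m, MonotoneOn (phat j) unitI ∧ ContinuousOn (phat j) unitI ∧
      ConvexOn ℝ unitI (phat j) ∧ PiecewiseLinearOn (phat j)) := by
  have hS : ∀ j, ∀ a ∈ Finset.image (fun i => v i j) Finset.univ, 0 ≤ a := fun j a ha => by
    obtain ⟨i, -, rfl⟩ := Finset.mem_image.1 ha
    exact hv i j
  have hmono : ∀ j, Monotone (phat j) := fun j => hphat j ▸ disc_mono (hS j)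
  have hconv : ∀ j, ConvexOn ℝ unitI (phat j) := fun j => hphat j ▸ convexOn_disc (hS j)
  have hcont : ∀ j, Continuous (phat j) := fun j => hphat j ▸ continuous_disc _ _
  have hzero : ∀ j, phat j 0 = 0 := fun j => by
    rw [hphat j, disc_zero, funConvHull_zero (hp_nonneg j) (hp0 j)]
  refine ⟨fun i => ?_, fun j => ⟨(hmono j).monotoneOn _, (hcont j).continuousOn, hconv j,
    hphat j ▸ disc_piecewiseLinearOn _ _⟩⟩
  have hmem : ∀ j, v i j ∈ Finset.image (fun i => v i j) Finset.univ :=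
    fun j => Finset.mem_image_of_mem _ (Finset.mem_univ i)
  refine revenue_le_revenue_of_undominated_le (hb i) (hv i) hp_nonneg hp_mono hzero
    (fun j x hx => hzero j ▸ hmono j hx.1) hcont hconv (fun j => ell_mem_unitI _ (v i j))
    (fun j y hy => hphat j ▸ mul_sub_disc_le_ell (hmem j) hy) fun j t ht hund => hphat j ▸
      le_disc_funConvHull_ell_of_undominated (hp_nonneg j) (hp0 j) (hp_mono j) (hp_lc j) (hS j)
        (hmem j) ht hund

end
end
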